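/- Let $\lambda > 0$, $m > 0$, $R = \sqrt{m/\pi}$ and $\lambda_{c1} = \frac{4m\sqrt{2}}{\pi}$. If $\lambda > \lambda_{c1}$, then $2\pi R + \frac{\lambda\pi}{2R} > 2 \cdot \left(2\pi \frac{R}{\sqrt{2}} + \frac{(\lambda/4)\pi}{2 (R/\sqrt{2})}\right)$; i.e., one ball of area $m$ with charge parameter $\lambda$ has strictly more energy than two far-separated balls of area $m/2$ each carrying half the charge (so charge parameter $\lambda/4$ each). -/

import Mathlib

open Real

/-!
Write `P = 2πr` for the perimeter term and `Q = μπ/(2r)` for the charge term of a ball. Splitting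
it into `s²` equal balls, each with a `1/s²` share of the charge, scales the radius by `1/s` and
the charge parameter by `1/s⁴`, so the total energy becomes `s P + Q / s`. For `s > 1` we have
`P + Q - (s P + Q / s) = (s - 1) (Q / s - P)`, so splitting lowers the energy exactly when
`Q > s P`, i.e. `μ > 4 s r²`. For two balls `s = √2` and `r² = m / π`.
-/

noncomputable def ballEnergy (r μ : ℝ) : ℝ := 2 * π * r + μ * π / (2 * r)

lemma mul_add_div_lt_add_iff {s a b : ℝ} (hs : 1 < s) : s * a + b / s < a + b ↔ s * a < b := by
  have hs0 : 0 < s := one_pos.trans hs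
  have key : a + b - (s * a + b / s) = (s - 1) * (b / s - a) := by
    field_simp
    ring
  rw [← sub_pos, key, mul_pos_iff_of_pos_left (sub_pos.2 hs), sub_pos, lt_div_iff₀ hs0, mul_comm]

lemma sq_mul_ballEnergy_div {s : ℝ} (hs : s ≠ 0) (r μ : ℝ) :
    s ^ 2 * ballEnergy (r / s) (μ / s ^ 4) = s * (2 * π * r) + μ * π / (2 * r) / s := by
  unfold ballEnergy
  rcases eq_or_ne r 0 with rfl | hr
  · simp
  field_simp

lemma sq_mul_ballEnergy_div_lt_iff {s r : ℝ} (hs : 1 < s) (hr : 0 < r) (μ : ℝ) :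
    s ^ 2 * ballEnergy (r / s) (μ / s ^ 4) < ballEnergy r μ ↔ 4 * s * r ^ 2 < μ := by
  rw [sq_mul_ballEnergy_div (one_pos.trans hs).ne', ballEnergy, mul_add_div_lt_add_iff hs,
    lt_div_iff₀ (by positivity)]
  constructor <;> intro h <;> nlinarith [pi_pos]

theorem ball_splitting_instability (lam m R : ℝ) (hm : 0 < m)
    (hR : R = Real.sqrt (m / π)) (hlam : 4 * m * Real.sqrt 2 / π < lam) :
    2 * (2 * π * (R / Real.sqrt 2) + (lam / 4) * π / (2 * (R / Real.sqrt 2)))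
      < 2 * π * R + lam * π / (2 * R) := by
  have hR0 : 0 < R := hR ▸ sqrt_pos.2 (by positivity)
  have hR2 : R ^ 2 = m / π := hR ▸ sq_sqrt (by positivity)
  have hsplit := (sq_mul_ballEnergy_div_lt_iff one_lt_sqrt_two hR0 lam).2 <| by
    rw [hR2]
    convert hlam using 1
    ring
  have h4 : √2 ^ 4 = 4 := by
    rw [show 4 = 2 * 2 by rfl, pow_mul, sq_sqrt zero_le_two]
    norm_num
  rwa [sq_sqrt zero_le_two, h4] at hsplit
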